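/- Define the lifted Goursat word LG(W) of a Goursat word W = R·W' as follows: remove the initial R; if the resulting word begins with a symbol followed by V (i.e., the new second symbol is V), replace that V by R and replace any immediately succeeding T's by R's, stopping at the next R, next V, or end of word. Then LG(W) is again a Goursat word, of length one less than W. -/

import Mathlib

/-- The alphabet `{R, V, T}` of RVT/Goursat code words. -/
inductive RVT : Type
  | R : RVT
  | V : RVT
  | T : RVT
deriving DecidableEq

open RVT

/-- A Goursat word: nonempty, starts with `R`, the symbol in position 2
(if any) is not `V`, and every `T` is immediately preceded by `V` or `T`
(hence the first non-`R` symbol, if any, is `V`). -/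
def IsGoursat (W : List RVT) : Prop :=
  W ≠ [] ∧ W.head? = some R ∧ W[1]? ≠ some V ∧
    ∀ i : ℕ, W[i + 1]? = some T →
      (W[i]? = some V ∨ W[i]? = some T)

/-- Replace an initial run of `T`'s by `R`'s, stopping at the next `R`,
the next `V`, or the end of the word. -/
def repairT : List RVT → List RVT
  | [] => []
  | T :: rest => R :: repairT rest
  | s :: rest => s :: rest

/-- The lifted Goursat word `LG(W)`: remove the initial `R`; if the new
second symbol is `V`, replace it by `R` and likewise replace any immediately
succeeding `T`'s by `R`'s. -/
def LG : List RVT → List RVT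
  | _ :: x :: V :: rest => x :: R :: repairT rest
  | _ :: rest => rest
  | [] => []

/-! A Goursat word of length at least two begins with `R R`, and the condition on `T`s only
constrains adjacent letters, so it is a `List.IsChain` condition. Deleting the first `R` keeps
it; if the new second letter is `V`, turning it and the run of `T`s after it into `R`s cannot
create a `T` after an `R`, because the run ends at an `R`, a `V` or the end of the word. -/

open List

def MayPrecede (a b : RVT) : Prop := b = T → a = V ∨ a = T

lemma mayPrecede_R_iff {b : RVT} : MayPrecede R b ↔ b ≠ T := by
  cases b <;> simp [MayPrecede]

lemma isChain_mayPrecede_iff {W : List RVT} :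
    IsChain MayPrecede W ↔ ∀ i : ℕ, W[i + 1]? = some T → W[i]? = some V ∨ W[i]? = some T := by
  rw [isChain_iff_getElem]
  constructor
  · intro h i hi
    have hlt : i + 1 < W.length := by
      by_contra hge
      simp [getElem?_eq_none (not_lt.mp hge)] at hi
    simpa [getElem?_eq_getElem (Nat.lt_of_succ_lt hlt)] using
      h i hlt (by simpa [getElem?_eq_getElem hlt] using hi)
  · intro h i hi hT
    simpa [getElem?_eq_getElem (Nat.lt_of_succ_lt hi)] using
      h i (by simp [getElem?_eq_getElem hi, hT])

lemma isGoursat_cons_iff {a : RVT} {l : List RVT} :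
    IsGoursat (a :: l) ↔ a = R ∧ l.head? ≠ some V ∧ IsChain MayPrecede (R :: l) := by
  simp only [IsGoursat, ← isChain_mayPrecede_iff]
  constructor
  · rintro ⟨-, ha, h⟩
    obtain rfl : a = R := by simpa using ha
    simpa [head?_eq_getElem?] using h
  · rintro ⟨rfl, h⟩
    simpa [head?_eq_getElem?] using h

lemma isChain_R_cons_iff {l : List RVT} :
    IsChain MayPrecede (R :: l) ↔ l.head? ≠ some T ∧ IsChain MayPrecede l := by
  cases l <;> simp [mayPrecede_R_iff]

lemma length_repairT (l : List RVT) : (repairT l).length = l.length := by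
  fun_induction repairT l <;> simp_all

lemma head?_repairT_ne_T (l : List RVT) : (repairT l).head? ≠ some T := by
  fun_cases repairT l <;> simp_all

lemma isChain_repairT {l : List RVT} (h : IsChain MayPrecede l) :
    IsChain MayPrecede (repairT l) := by
  fun_induction repairT l with
  | case1 => exact .nil
  | case2 rest ih => exact isChain_R_cons_iff.mpr ⟨head?_repairT_ne_T rest, ih h.tail⟩
  | case3 => exact h

lemma LG_cons_cons_of_head?_ne_V {a x : RVT} {l : List RVT} (h : l.head? ≠ some V) :
    LG (a :: x :: l) = x :: l := by
  match l with
  | [] | R :: _ | T :: _ => rfl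
  | V :: _ => simp at h

/-- if `W` is a Goursat word (of length at least 2), then
`LG(W)` is again a Goursat word, of length one less than `W`. -/
theorem LG_isGoursat (W : List RVT) (hW : IsGoursat W) (hlen : 2 ≤ W.length) :
    IsGoursat (LG W) ∧ (LG W).length = W.length - 1 := by
  obtain ⟨a, x, rest, rfl⟩ : ∃ a x rest, W = a :: x :: rest := by
    match W, hlen with
    | a :: x :: rest, _ => exact ⟨a, x, rest, rfl⟩
  obtain ⟨rfl, hxV, hchain⟩ := isGoursat_cons_iff.mp hW
  obtain rfl : x = R := by
    have hxT := (isChain_R_cons_iff.mp hchain).1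
    cases x <;> simp_all
  obtain ⟨-, hrest⟩ := isChain_R_cons_iff.mp hchain
  by_cases hV : rest.head? = some V
  · obtain ⟨rest, rfl⟩ : ∃ rest', rest = V :: rest' := by cases rest <;> simp_all
    refine ⟨isGoursat_cons_iff.mpr ⟨rfl, by simp, ?_⟩, by simp [LG, length_repairT]⟩
    exact isChain_R_cons_iff.mpr
      ⟨by simp, isChain_R_cons_iff.mpr ⟨head?_repairT_ne_T _, isChain_repairT hrest.tail.tail⟩⟩
  · rw [LG_cons_cons_of_head?_ne_V hV]
    exact ⟨isGoursat_cons_iff.mpr ⟨rfl, hV, hrest⟩, by simp⟩
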